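/- Let Q be an irreducible regular single birth Q-matrix on ℤ≥0. Then the Q-process is strongly ergodic (i.e. sup_i 𝔼_i σ_0 < ∞) if and only if d < ∞ and sup_{k≥0} Σ_{j=0}^k (F_j^{(0)}·d − d_j) < ∞. -/

import Mathlib

open scoped ENNReal NNReal BigOperators Classical Topology
open Filter Set

noncomputable section

/-- `q` is a Q-matrix: nonnegative off-diagonal entries, and for every state `i` the
off-diagonal row sums converge to `q_i := -q i i ∈ (0,∞)`. -/
structure IsQMatrix {E : Type*} (q : E → E → ℝ) : Prop where
  offdiag_nonneg : ∀ i j, i ≠ j → 0 ≤ q i j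
  diag_neg : ∀ i, 0 < -q i i
  row_hasSum : ∀ i, HasSum (fun j => if j = i then 0 else q i j) (-q i i)

/-- Irreducibility: any two distinct states are joined by a finite chain of positive entries. -/
def MatIrreducible {E : Type*} (M : E → E → ℝ) : Prop :=
  ∀ i j : E, i ≠ j → Relation.TransGen (fun a b => 0 < M a b) i j

/-- Regularity (non-explosiveness) of a Q-matrix. -/
def QRegular {E : Type*} (q : E → E → ℝ) : Prop :=
  ∃ lam : ℝ, 0 < lam ∧
    ∀ u : E → ℝ, (∀ i, 0 ≤ u i) → (∀ i, u i ≤ 1) →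
      (∀ i, HasSum (fun j => q i j * u j) (lam * u i)) → ∀ i, u i = 0

/-- The embedding chain `Π(i,j) = q(i,j)/q_i` for `j ≠ i`, `Π(i,i) = 0`, as `ℝ≥0∞`. -/
def embed {E : Type*} (q : E → E → ℝ) (i j : E) : ℝ≥0∞ :=
  if j = i then 0 else ENNReal.ofReal (q i j / (-q i i))

/-- `x` is the minimal nonnegative solution of the system `x i = ∑ j, A i j * x j + g i`. -/
def IsMinSol {ι : Type*} (A : ι → ι → ℝ≥0∞) (g : ι → ℝ≥0∞) (x : ι → ℝ≥0∞) : Prop :=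
  (∀ i, x i = (∑' j, A i j * x j) + g i) ∧
    ∀ y : ι → ℝ≥0∞, (∀ i, y i = (∑' j, A i j * y j) + g i) → ∀ i, x i ≤ y i

/-- Recurrence of a stochastic `ℝ≥0∞`-matrix at a state `o`: the minimal nonnegative
solution of `u i = ∑_{j ≠ o} P i j * u j + P i o` (for `i ≠ o`) is identically 1. -/
def RecurrentAt {E : Type*} (P : E → E → ℝ≥0∞) (o : E) : Prop :=
  ∀ u : {i : E // i ≠ o} → ℝ≥0∞,
    IsMinSol (fun i j : {i : E // i ≠ o} => P i.1 j.1) (fun i => P i.1 o) u → ∀ i, u i = 1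

/-- Recurrence of a stochastic `ℝ≥0∞`-matrix (at some state). -/
def MatRecurrent {E : Type*} (P : E → E → ℝ≥0∞) : Prop := ∃ o : E, RecurrentAt P o

/-- `m l i = 𝔼_i σ_H ^ l`: the family of moments of the return time to `H`,
defined inductively via minimal nonnegative solutions. -/
def IsMomentSeq {E : Type*} (q : E → E → ℝ) (H : Set E) (m : ℕ → E → ℝ≥0∞) : Prop :=
  (∀ i, m 0 i = 1) ∧
    ∀ l : ℕ,
      IsMinSol (fun i j => if j ∈ H then 0 else embed q i j)
        (fun i => (((l : ℝ≥0∞) + 1) / ENNReal.ofReal (-q i i)) * m l i) (m (l + 1))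

/-- A stochastic matrix. -/
def IsStochastic {E : Type*} (P : E → E → ℝ) : Prop :=
  (∀ i j, 0 ≤ P i j) ∧ ∀ i, HasSum (P i) 1

/-- `n`-step transition "probabilities" of `P`, valued in `ℝ≥0∞`. -/
def nstepE {E : Type*} (P : E → E → ℝ) : ℕ → E → E → ℝ≥0∞
  | 0 => fun i j => if i = j then 1 else 0
  | n + 1 => fun i j => ∑' k, nstepE P n i k * ENNReal.ofReal (P k j)

/-- Aperiodicity: every state has period 1 (the gcd of its positive return times is 1). -/
def MatAperiodic {E : Type*} (P : E → E → ℝ) : Prop :=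
  ∀ i : E, ∀ d : ℕ, (∀ n : ℕ, 0 < n → 0 < nstepE P n i i → d ∣ n) → d = 1

/-- `sigmaDist P H n i = ℙ_i (σ_H = n + 1)`, where `σ_H = inf {n ≥ 1 : X n ∈ H}` is the
return time to `H` of the chain with transition matrix `P` started at `i`. -/
def sigmaDist {E : Type*} (P : E → E → ℝ) (H : Set E) : ℕ → E → ℝ≥0∞
  | 0 => fun i => ∑' j, if j ∈ H then ENNReal.ofReal (P i j) else 0
  | n + 1 => fun i => ∑' j, if j ∈ H then 0 else ENNReal.ofReal (P i j) * sigmaDist P H n j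

/-- Recurrence of the discrete-time chain: `ℙ_i (σ_H < ∞) = 1` for every `i`. -/
def DRecurrent {E : Type*} (P : E → E → ℝ) (H : Set E) : Prop :=
  ∀ i, (∑' n, sigmaDist P H n i) = 1

/-- `dMoment P H l i = 𝔼_i σ_H ^ l` (for a recurrent chain). -/
def dMoment {E : Type*} (P : E → E → ℝ) (H : Set E) (l : ℕ) (i : E) : ℝ≥0∞ :=
  ∑' n : ℕ, ((n + 1 : ℕ) : ℝ≥0∞) ^ l * sigmaDist P H n i

/-- A single birth Q-matrix on ℕ. -/
def IsSingleBirth (q : ℕ → ℕ → ℝ) : Prop :=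
  (∀ i, 0 < q i (i + 1)) ∧ ∀ i j, 2 ≤ j → q i (i + j) = 0

/-- `sbF q n i = F_n^{(i)}` of single birth theory. -/
def sbF (q : ℕ → ℕ → ℝ) : ℕ → ℕ → ℝ
  | n, i =>
    if i = n then 1
    else (1 / q n (n + 1)) *
      ∑ k ∈ (Finset.Ico i n).attach,
        (∑ j ∈ Finset.range (k.1 + 1), q n j) * sbF q k.1 i
  termination_by n i => n
  decreasing_by exact (Finset.mem_Ico.mp k.2).2

/-- `sbd q n = d_n` of single birth theory. -/
def sbd (q : ℕ → ℕ → ℝ) : ℕ → ℝ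
  | 0 => 0
  | n + 1 =>
    (1 / q (n + 1) (n + 2)) *
      (1 + ∑ k ∈ (Finset.range (n + 1)).attach,
        (∑ j ∈ Finset.range (k.1 + 1), q (n + 1) j) * sbd q k.1)
  termination_by n => n
  decreasing_by exact Finset.mem_range.mp k.2

/-- `d = sup_k (∑_{n=0}^k d_n) / (∑_{n=0}^k F_n^{(0)})`, valued in `ℝ≥0∞`. -/
def sbdConst (q : ℕ → ℕ → ℝ) : ℝ≥0∞ :=
  ⨆ k : ℕ, ENNReal.ofReal
    ((∑ n ∈ Finset.range (k + 1), sbd q n) / (∑ n ∈ Finset.range (k + 1), sbF q n 0))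

/-- Solutions of the truncated single-birth system
`x i = ∑_{1 ≤ j ≤ N, j ≠ i} (q i j / q_i) x j + 1 / q_i` for `1 ≤ i ≤ N`. -/
def sbTruncSol (q : ℕ → ℕ → ℝ) (N : ℕ) (x : ℕ → ℝ) : Prop :=
  ∀ i, 1 ≤ i → i ≤ N →
    x i = (∑ j ∈ Finset.Icc 1 N, if j = i then 0 else (q i j / (-q i i)) * x j) + 1 / (-q i i)

/-- The Q-matrix with `q(i, i+1) = i+1` and `q(i, 0) = α_i` (for `i ≥ 1`). -/
def catQ (a : ℕ → ℝ) : ℕ → ℕ → ℝ := fun i j =>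
  if j = i + 1 then (i + 1 : ℝ)
  else if j = 0 ∧ 1 ≤ i then a i
  else if j = i then -((i + 1 : ℝ) + if 1 ≤ i then a i else 0)
  else 0

/-- `α_i = (log i)^{-γ}` for `i ≥ 3`, `α_1 = α_2 = 0`. -/
def logAlpha (γ : ℝ) : ℕ → ℝ := fun i => if 3 ≤ i then Real.log i ^ (-γ) else 0

/-- The stochastic matrix with `P(i, i+1) = p_i` and `P(i, 0) = 1 - p_i`. -/
def birthP (p : ℕ → ℝ) : ℕ → ℕ → ℝ := fun i j =>
  if j = i + 1 then p i else if j = 0 then 1 - p i else 0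

section SBAux

variable {q : ℕ → ℕ → ℝ}

lemma qzero (hsb : IsSingleBirth q) {i j : ℕ} (h : i + 2 ≤ j) : q i j = 0 := by
  have h2 := hsb.2 i (j - i) (by omega)
  rwa [show i + (j - i) = j by omega] at h2

lemma rowfin (hq : IsQMatrix q) (hsb : IsSingleBirth q) (i : ℕ) :
    ∑ j ∈ Finset.range (i + 2), (if j = i then 0 else q i j) = -q i i := by
  have h := hq.row_hasSum i
  have hfun : (fun j => @ite ℝ (j = i) (Classical.propDecidable (j = i)) 0 (q i j))
      = fun j => if j = i then 0 else q i j := by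
    funext j; by_cases hj : j = i <;> simp [hj]
  rw [hfun] at h
  refine HasSum.unique ?_ h
  refine hasSum_sum_of_ne_finset_zero ?_
  intro j hj
  have hij : i + 2 ≤ j := by simpa [Finset.mem_range, Nat.not_lt] using hj
  rw [if_neg (by omega : ¬ j = i), qzero hsb hij]

lemma rowsum' (hq : IsQMatrix q) (hsb : IsSingleBirth q) (i : ℕ) :
    -q i i = (∑ j ∈ Finset.range i, q i j) + q i (i + 1) := by
  rw [← rowfin hq hsb i, Finset.sum_range_succ, Finset.sum_range_succ,
    if_pos rfl, if_neg (by omega : ¬ i + 1 = i)]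
  rw [Finset.sum_congr rfl
    (fun j hj => if_neg (by have := Finset.mem_range.mp hj; omega : ¬ j = i))]
  ring

lemma sbF_zero' : sbF q 0 0 = 1 := by rw [sbF]; simp

lemma sbd_zero' : sbd q 0 = 0 := by rw [sbd]

lemma sbF_eq {n : ℕ} (hn : n ≠ 0) :
    sbF q n 0 = (1 / q n (n+1)) *
      ∑ k ∈ Finset.range n, (∑ j ∈ Finset.range (k+1), q n j) * sbF q k 0 := by
  rw [sbF, if_neg (Ne.symm hn)]
  congr 1
  rw [Finset.sum_attach (Finset.Ico 0 n)
    (fun k => (∑ j ∈ Finset.range (k + 1), q n j) * sbF q k 0), Finset.range_eq_Ico]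

lemma sbd_eq (n : ℕ) :
    sbd q (n+1) = (1 / q (n+1) (n+2)) *
      (1 + ∑ k ∈ Finset.range (n+1), (∑ j ∈ Finset.range (k+1), q (n+1) j) * sbd q k) := by
  rw [sbd]
  congr 2
  exact Finset.sum_attach (Finset.range (n+1))
    (fun k => (∑ j ∈ Finset.range (k + 1), q (n+1) j) * sbd q k)

lemma qk_nonneg (hq : IsQMatrix q) {n k : ℕ} (hk : k < n) :
    0 ≤ ∑ j ∈ Finset.range (k+1), q n j := by
  refine Finset.sum_nonneg fun j hj => ?_
  have := Finset.mem_range.mp hj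
  exact hq.offdiag_nonneg n j (by omega)

lemma sbF_nonneg (hq : IsQMatrix q) (hsb : IsSingleBirth q) : ∀ n, 0 ≤ sbF q n 0 := by
  intro n
  induction n using Nat.strong_induction_on with
  | _ n ih =>
    rcases Nat.eq_zero_or_pos n with h | h
    · subst h; rw [sbF_zero']; norm_num
    · rw [sbF_eq (by omega : n ≠ 0)]
      refine mul_nonneg (one_div_nonneg.mpr (hsb.1 n).le) (Finset.sum_nonneg fun k hk => ?_)
      exact mul_nonneg (qk_nonneg hq (Finset.mem_range.mp hk)) (ih k (Finset.mem_range.mp hk))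

lemma sbd_nonneg (hq : IsQMatrix q) (hsb : IsSingleBirth q) : ∀ n, 0 ≤ sbd q n := by
  intro n
  induction n using Nat.strong_induction_on with
  | _ n ih =>
    match n with
    | 0 => rw [sbd_zero']
    | Nat.succ p =>
      rw [sbd_eq p]
      refine mul_nonneg (one_div_nonneg.mpr (hsb.1 (p+1)).le) ?_
      refine add_nonneg zero_le_one (Finset.sum_nonneg fun k hk => ?_)
      exact mul_nonneg (qk_nonneg hq (Finset.mem_range.mp hk)) (ih k (Finset.mem_range.mp hk))

lemma sbF_mul (hsb : IsSingleBirth q) {n : ℕ} (hn : 1 ≤ n) :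
    q n (n+1) * sbF q n 0
      = ∑ k ∈ Finset.range n, (∑ j ∈ Finset.range (k+1), q n j) * sbF q k 0 := by
  rw [sbF_eq (by omega : n ≠ 0), ← mul_assoc, mul_one_div, div_self (hsb.1 n).ne', one_mul]

lemma sbd_mul (hsb : IsSingleBirth q) {n : ℕ} (hn : 1 ≤ n) :
    q n (n+1) * sbd q n
      = 1 + ∑ k ∈ Finset.range n, (∑ j ∈ Finset.range (k+1), q n j) * sbd q k := by
  obtain ⟨p, rfl⟩ : ∃ p, n = p + 1 := ⟨n - 1, by omega⟩
  rw [sbd_eq p, ← mul_assoc, mul_one_div, div_self (hsb.1 (p+1)).ne', one_mul]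

end SBAux
section SBAux2

variable {q : ℕ → ℕ → ℝ}

lemma teles (x : ℕ → ℝ) {j n : ℕ} (h : j ≤ n) :
    ∑ k ∈ Finset.Ico j n, (x (k+1) - x k) = x n - x j := by
  rw [Finset.sum_Ico_eq_sub _ h, Finset.sum_range_sub, Finset.sum_range_sub]
  ring

lemma abel_sum (a v : ℕ → ℝ) (n : ℕ) :
    ∑ j ∈ Finset.range n, a j * ∑ k ∈ Finset.Ico j n, v k
      = ∑ k ∈ Finset.range n, (∑ j ∈ Finset.range (k+1), a j) * v k := by
  simp_rw [Finset.mul_sum, Finset.sum_mul, Finset.range_eq_Ico]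
  exact Finset.sum_Ico_Ico_comm 0 n fun j k => a j * v k

lemma heq_iff (hq : IsQMatrix q) (hsb : IsSingleBirth q) (x : ℕ → ℝ) (n : ℕ) :
    ((-q n n) * x n = (∑ j ∈ Finset.range n, q n j * x j) + q n (n+1) * x (n+1) + 1)
      ↔ q n (n+1) * (x (n+1) - x n)
          = (∑ j ∈ Finset.range n, q n j * (x n - x j)) - 1 := by
  have hrow := rowsum' hq hsb n
  have hs : ∑ j ∈ Finset.range n, q n j * (x n - x j)
      = (∑ j ∈ Finset.range n, q n j) * x n - ∑ j ∈ Finset.range n, q n j * x j := by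
    rw [Finset.sum_mul, ← Finset.sum_sub_distrib]
    exact Finset.sum_congr rfl fun j _ => by ring
  rw [hs]
  constructor <;> intro h <;> linear_combination -h + x n * hrow

lemma core_sum (hq : IsQMatrix q) (hsb : IsSingleBirth q) (x : ℕ → ℝ) (c : ℝ)
    {n : ℕ} (hn : 1 ≤ n)
    (hd : ∀ k, k < n → x (k+1) - x k = c * sbF q k 0 - sbd q k) :
    (∑ j ∈ Finset.range n, q n j * (x n - x j)) - 1
      = q n (n+1) * (c * sbF q n 0 - sbd q n) := by
  have h1 : ∀ j ∈ Finset.range n, q n j * (x n - x j)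
      = q n j * ∑ k ∈ Finset.Ico j n, (c * sbF q k 0 - sbd q k) := by
    intro j hj
    rw [← teles x (le_of_lt (Finset.mem_range.mp hj))]
    congr 1
    exact Finset.sum_congr rfl fun k hk => hd k (Finset.mem_Ico.mp hk).2
  rw [Finset.sum_congr rfl h1, abel_sum]
  have h2 : ∑ k ∈ Finset.range n, (∑ j ∈ Finset.range (k+1), q n j) * (c * sbF q k 0 - sbd q k)
      = c * (∑ k ∈ Finset.range n, (∑ j ∈ Finset.range (k+1), q n j) * sbF q k 0)
        - ∑ k ∈ Finset.range n, (∑ j ∈ Finset.range (k+1), q n j) * sbd q k := by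
    rw [Finset.mul_sum, ← Finset.sum_sub_distrib]
    exact Finset.sum_congr rfl fun k _ => by ring
  rw [h2, ← sbF_mul hsb hn]
  have h3 := sbd_mul hsb hn
  linear_combination h3

lemma diff_of_heq (hq : IsQMatrix q) (hsb : IsSingleBirth q) (x : ℕ → ℝ) (hx0 : x 0 = 0)
    (heq : ∀ n, 1 ≤ n → (-q n n) * x n
      = (∑ j ∈ Finset.range n, q n j * x j) + q n (n+1) * x (n+1) + 1) :
    ∀ n, x (n+1) - x n = x 1 * sbF q n 0 - sbd q n := by
  intro n
  induction n using Nat.strong_induction_on with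
  | _ n ih =>
    rcases Nat.eq_zero_or_pos n with h | h
    · subst h; rw [sbF_zero', sbd_zero', hx0]; ring
    · have h1 := (heq_iff hq hsb x n).mp (heq n h)
      rw [core_sum hq hsb x (x 1) h (fun k hk => ih k hk)] at h1
      exact mul_left_cancel₀ (hsb.1 n).ne' h1

lemma heq_of_diff (hq : IsQMatrix q) (hsb : IsSingleBirth q) (x : ℕ → ℝ) (c : ℝ)
    (hd : ∀ n, x (n+1) - x n = c * sbF q n 0 - sbd q n) :
    ∀ n, 1 ≤ n → (-q n n) * x n
      = (∑ j ∈ Finset.range n, q n j * x j) + q n (n+1) * x (n+1) + 1 := by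
  intro n hn
  refine (heq_iff hq hsb x n).mpr ?_
  rw [core_sum hq hsb x c hn (fun k _ => hd k), hd n]

lemma sum_split (x : ℕ → ℝ) (hx0 : x 0 = 0) (c : ℝ) {i : ℕ} (hi : 1 ≤ i) :
    ∑ j ∈ Finset.range (i+2), (if j = 0 ∨ j = i then 0 else (q i j / c) * x j)
      = ((∑ j ∈ Finset.range i, q i j * x j) + q i (i+1) * x (i+1)) / c := by
  rw [Finset.sum_range_succ, Finset.sum_range_succ,
    if_neg (by omega : ¬ (i + 1 = 0 ∨ i + 1 = i)), if_pos (Or.inr rfl)]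
  have h1 : ∀ j ∈ Finset.range i, (if j = 0 ∨ j = i then 0 else (q i j / c) * x j)
      = q i j * x j / c := by
    intro j hj
    have hj' := Finset.mem_range.mp hj
    by_cases h0 : j = 0
    · subst h0; simp [hx0]
    · rw [if_neg (by omega : ¬ (j = 0 ∨ j = i))]; ring
  rw [Finset.sum_congr rfl h1, ← Finset.sum_div]
  ring

lemma neq_iff (hq : IsQMatrix q) (hsb : IsSingleBirth q) (x : ℕ → ℝ) (hx0 : x 0 = 0)
    {i : ℕ} (hi : 1 ≤ i) :
    (x i = (∑ j ∈ Finset.range (i+2),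
        if j = 0 ∨ j = i then 0 else (q i j / (-q i i)) * x j) + (-q i i)⁻¹)
      ↔ ((-q i i) * x i
          = (∑ j ∈ Finset.range i, q i j * x j) + q i (i+1) * x (i+1) + 1) := by
  rw [sum_split x hx0 (-q i i) hi]
  have hc : (-q i i) ≠ 0 := (hq.diag_neg i).ne'
  rw [inv_eq_one_div, ← add_div, eq_div_iff hc, mul_comm (x i) (-q i i)]

end SBAux2
section SBAux3

variable {q : ℕ → ℕ → ℝ}

lemma embed_diag (i : ℕ) : embed q i i = 0 := by rw [embed, if_pos rfl]

lemma embed_ne {i j : ℕ} (h : j ≠ i) :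
    embed q i j = ENNReal.ofReal (q i j / (-q i i)) := by rw [embed, if_neg h]

lemma tsum_fin (hsb : IsSingleBirth q) (w : ℕ → ℝ≥0∞) (i : ℕ) :
    (∑' j, (if j = 0 then 0 else embed q i j) * w j)
      = ∑ j ∈ Finset.range (i+2), (if j = 0 then 0 else embed q i j) * w j := by
  refine tsum_eq_sum ?_
  intro j hj
  have hij : i + 2 ≤ j := by simpa [Finset.mem_range, Nat.not_lt] using hj
  rw [if_neg (by omega : ¬ j = 0), embed_ne (by omega : j ≠ i), qzero hsb hij]
  simp

lemma m_fin (hq : IsQMatrix q) (hsb : IsSingleBirth q) {m : ℕ → ℝ≥0∞}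
    (hm : ∀ i, m i = (∑' j, (if j = 0 then 0 else embed q i j) * m j)
      + (ENNReal.ofReal (-q i i))⁻¹)
    (h1 : m 1 ≠ ⊤) : ∀ n, 1 ≤ n → m n ≠ ⊤ := by
  intro n hn
  induction n with
  | zero => omega
  | succ k ihk =>
    rcases Nat.eq_zero_or_pos k with hk | hk
    · subst hk; exact h1
    · have hkfin := ihk hk
      have heq := hm k
      rw [tsum_fin hsb m k] at heq
      have hterm : (if k + 1 = 0 then 0 else embed q k (k+1)) * m (k+1) ≤ m k := by
        rw [heq]
        refine le_trans ?_ le_self_add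
        exact Finset.single_le_sum (f := fun j => (if j = 0 then 0 else embed q k j) * m j)
          (fun _ _ => zero_le) (by simp)
      rw [if_neg (by omega : ¬ k + 1 = 0)] at hterm
      intro htop
      rw [htop] at hterm
      have hpos : embed q k (k+1) ≠ 0 := by
        rw [embed_ne (by omega : k + 1 ≠ k)]
        exact (ENNReal.ofReal_pos.mpr (div_pos (hsb.1 k) (hq.diag_neg k))).ne'
      rw [ENNReal.mul_top hpos] at hterm
      exact hkfin (top_le_iff.mp hterm)

lemma real_eq (hq : IsQMatrix q) (hsb : IsSingleBirth q) {m : ℕ → ℝ≥0∞}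
    (hm : ∀ i, m i = (∑' j, (if j = 0 then 0 else embed q i j) * m j)
      + (ENNReal.ofReal (-q i i))⁻¹)
    (hfin : ∀ n, 1 ≤ n → m n ≠ ⊤) (i : ℕ) :
    (m i).toReal = (∑ j ∈ Finset.range (i+2),
        if j = 0 ∨ j = i then 0 else (q i j / (-q i i)) * (m j).toReal) + (-q i i)⁻¹ := by
  have heq := hm i
  rw [tsum_fin hsb m i] at heq
  have hterm : ∀ j ∈ Finset.range (i+2), (if j = 0 then 0 else embed q i j) * m j ≠ ⊤ := by
    intro j hj
    by_cases h0 : j = 0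
    · simp [h0]
    · by_cases hji : j = i
      · subst hji; rw [if_neg h0, embed_diag]; simp
      · rw [if_neg h0]
        exact ENNReal.mul_ne_top (by rw [embed_ne hji]; exact ENNReal.ofReal_ne_top)
          (hfin j (by omega))
  have hsumfin : (∑ j ∈ Finset.range (i+2), (if j = 0 then 0 else embed q i j) * m j) ≠ ⊤ := by
    refine (ENNReal.sum_lt_top.mpr fun a ha => ?_).ne
    exact lt_top_iff_ne_top.mpr (hterm a ha)
  have hinvfin : (ENNReal.ofReal (-q i i))⁻¹ ≠ ⊤ :=
    ENNReal.inv_ne_top.mpr (ENNReal.ofReal_pos.mpr (hq.diag_neg i)).ne'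
  rw [heq, ENNReal.toReal_add hsumfin hinvfin, ENNReal.toReal_sum hterm]
  congr 1
  · refine Finset.sum_congr rfl fun j hj => ?_
    by_cases h0 : j = 0
    · simp [h0]
    · by_cases hji : j = i
      · subst hji; rw [if_neg h0, if_pos (Or.inr rfl), embed_diag]; simp
      · rw [if_neg h0, if_neg (by tauto : ¬ (j = 0 ∨ j = i)), embed_ne hji,
          ENNReal.toReal_mul, ENNReal.toReal_ofReal
            (div_nonneg (hq.offdiag_nonneg i j (Ne.symm hji)) (hq.diag_neg i).le)]
  · rw [ENNReal.toReal_inv, ENNReal.toReal_ofReal (hq.diag_neg i).le]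

lemma sol_of_real (hq : IsQMatrix q) (hsb : IsSingleBirth q) (Y : ℕ → ℝ)
    (hY : ∀ n, 0 ≤ Y n)
    (heq : ∀ i, Y i = (∑ j ∈ Finset.range (i+2),
        if j = 0 ∨ j = i then 0 else (q i j / (-q i i)) * Y j) + (-q i i)⁻¹) (i : ℕ) :
    ENNReal.ofReal (Y i) = (∑' j, (if j = 0 then 0 else embed q i j) * ENNReal.ofReal (Y j))
      + (ENNReal.ofReal (-q i i))⁻¹ := by
  rw [tsum_fin hsb _ i]
  have h1 : ∀ j ∈ Finset.range (i+2), (if j = 0 then 0 else embed q i j) * ENNReal.ofReal (Y j)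
      = ENNReal.ofReal (if j = 0 ∨ j = i then 0 else (q i j / (-q i i)) * Y j) := by
    intro j hj
    by_cases h0 : j = 0
    · simp [h0]
    · by_cases hji : j = i
      · subst hji; rw [if_neg h0, if_pos (Or.inr rfl), embed_diag]; simp
      · rw [if_neg h0, if_neg (by tauto : ¬ (j = 0 ∨ j = i)), embed_ne hji,
          ← ENNReal.ofReal_mul
            (div_nonneg (hq.offdiag_nonneg i j (Ne.symm hji)) (hq.diag_neg i).le)]
  have h2 : ∀ j ∈ Finset.range (i+2),
      0 ≤ (if j = 0 ∨ j = i then 0 else (q i j / (-q i i)) * Y j) := by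
    intro j hj
    by_cases hc : j = 0 ∨ j = i
    · rw [if_pos hc]
    · rw [if_neg hc]
      push_neg at hc
      exact mul_nonneg
        (div_nonneg (hq.offdiag_nonneg i j (Ne.symm hc.2)) (hq.diag_neg i).le) (hY j)
  rw [Finset.sum_congr rfl h1, ← ENNReal.ofReal_sum_of_nonneg h2,
    ← ENNReal.ofReal_inv_of_pos (hq.diag_neg i),
    ← ENNReal.ofReal_add (Finset.sum_nonneg h2) (inv_nonneg.mpr (hq.diag_neg i).le), ← heq i]

end SBAux3
section SBAux4

variable {q : ℕ → ℕ → ℝ}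

lemma SF_pos (hq : IsQMatrix q) (hsb : IsSingleBirth q) (k : ℕ) :
    0 < ∑ n ∈ Finset.range (k+1), sbF q n 0 := by
  have h1 : sbF q 0 0 ≤ ∑ n ∈ Finset.range (k+1), sbF q n 0 :=
    Finset.single_le_sum (fun n _ => sbF_nonneg hq hsb n) (by simp)
  rw [sbF_zero'] at h1
  linarith

lemma Sd_nn (hq : IsQMatrix q) (hsb : IsSingleBirth q) (k : ℕ) :
    0 ≤ ∑ n ∈ Finset.range (k+1), sbd q n :=
  Finset.sum_nonneg fun n _ => sbd_nonneg hq hsb n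

lemma ratio_le (hq : IsQMatrix q) (hsb : IsSingleBirth q) (h : sbdConst q ≠ ⊤) (k : ℕ) :
    (∑ n ∈ Finset.range (k+1), sbd q n)
      ≤ (sbdConst q).toReal * ∑ n ∈ Finset.range (k+1), sbF q n 0 := by
  have h1 : ENNReal.ofReal ((∑ n ∈ Finset.range (k+1), sbd q n)
      / (∑ n ∈ Finset.range (k+1), sbF q n 0)) ≤ sbdConst q :=
    le_iSup (fun k : ℕ => ENNReal.ofReal ((∑ n ∈ Finset.range (k + 1), sbd q n)
      / (∑ n ∈ Finset.range (k + 1), sbF q n 0))) k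
  have h2 := ENNReal.toReal_mono h h1
  rw [ENNReal.toReal_ofReal (div_nonneg (Sd_nn hq hsb k) (SF_pos hq hsb k).le)] at h2
  exact (div_le_iff₀ (SF_pos hq hsb k)).mp h2

/-- The explicit supersolution. -/
def sbY (q : ℕ → ℕ → ℝ) (D : ℝ) : ℕ → ℝ := fun n =>
  if n = 0 then D + (-q 0 0)⁻¹
  else D * (∑ j ∈ Finset.range n, sbF q j 0) - ∑ j ∈ Finset.range n, sbd q j

def sbX (q : ℕ → ℕ → ℝ) (D : ℝ) : ℕ → ℝ := fun n =>
  if n = 0 then 0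
  else D * (∑ j ∈ Finset.range n, sbF q j 0) - ∑ j ∈ Finset.range n, sbd q j

lemma sbY_one (D : ℝ) : sbY q D 1 = D := by
  simp [sbY, Finset.sum_range_one, sbF_zero', sbd_zero']

lemma sbY_eq_sbX (D : ℝ) {n : ℕ} (hn : n ≠ 0) : sbY q D n = sbX q D n := by
  simp [sbY, sbX, hn]

lemma sbX_diff (D : ℝ) (n : ℕ) :
    sbX q D (n+1) - sbX q D n = D * sbF q n 0 - sbd q n := by
  match n with
  | 0 => simp [sbX, Finset.sum_range_one]
  | Nat.succ p =>
    have e1 : sbX q D (p+2) = D * (∑ j ∈ Finset.range (p+2), sbF q j 0)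
        - ∑ j ∈ Finset.range (p+2), sbd q j := by simp [sbX]
    have e2 : sbX q D (p+1) = D * (∑ j ∈ Finset.range (p+1), sbF q j 0)
        - ∑ j ∈ Finset.range (p+1), sbd q j := by simp [sbX]
    rw [e1, e2, Finset.sum_range_succ (f := fun j => sbF q j 0),
      Finset.sum_range_succ (f := fun j => sbd q j)]
    ring

lemma min_le_Y (hq : IsQMatrix q) (hsb : IsSingleBirth q) {m : ℕ → ℝ≥0∞}
    (hm : IsMinSol (fun i j => if j = 0 then 0 else embed q i j)
      (fun i => (ENNReal.ofReal (-q i i))⁻¹) m)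
    (D : ℝ) (hD0 : 0 ≤ D)
    (hD : ∀ k, (∑ n ∈ Finset.range (k+1), sbd q n)
      ≤ D * ∑ n ∈ Finset.range (k+1), sbF q n 0) :
    ∀ n, m n ≤ ENNReal.ofReal (sbY q D n) := by
  have hx0 : sbX q D 0 = 0 := by simp [sbX]
  have hx1 : sbX q D 1 = D := by simp [sbX, Finset.sum_range_one, sbF_zero', sbd_zero']
  have hheq := heq_of_diff hq hsb (sbX q D) D (sbX_diff D)
  have hneq : ∀ i, 1 ≤ i → sbX q D i = (∑ j ∈ Finset.range (i+2),
      if j = 0 ∨ j = i then 0 else (q i j / (-q i i)) * sbX q D j) + (-q i i)⁻¹ :=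
    fun i hi => (neq_iff hq hsb (sbX q D) hx0 hi).mpr (hheq i hi)
  have hYnn : ∀ n, 0 ≤ sbY q D n := by
    intro n
    match n with
    | 0 =>
      rw [show sbY q D 0 = D + (-q 0 0)⁻¹ from rfl]
      exact add_nonneg hD0 (inv_nonneg.mpr (hq.diag_neg 0).le)
    | Nat.succ p =>
      rw [sbY_eq_sbX D (by omega), show sbX q D (p+1)
        = D * (∑ j ∈ Finset.range (p+1), sbF q j 0) - ∑ j ∈ Finset.range (p+1), sbd q j
        from by simp [sbX]]
      have := hD p
      linarith
  have hYeq : ∀ i, sbY q D i = (∑ j ∈ Finset.range (i+2),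
      if j = 0 ∨ j = i then 0 else (q i j / (-q i i)) * sbY q D j) + (-q i i)⁻¹ := by
    intro i
    rcases Nat.eq_zero_or_pos i with h0 | h1
    · subst h0
      have hr : -q 0 0 = q 0 1 := by
        have := rowsum' hq hsb 0
        simpa using this
      have hq01 : q 0 1 ≠ 0 := by
        have := hsb.1 0
        simp only [Nat.zero_add] at this
        exact this.ne'
      rw [Finset.sum_range_succ, Finset.sum_range_one,
        if_pos (Or.inl rfl), if_neg (by omega : ¬ (1 = 0 ∨ 1 = 0)),
        sbY_eq_sbX D one_ne_zero, hx1,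
        show sbY q D 0 = D + (-q 0 0)⁻¹ from rfl, hr, div_self hq01]
      ring
    · rw [sbY_eq_sbX D (by omega), hneq i h1]
      congr 1
      refine Finset.sum_congr rfl fun j hj => ?_
      by_cases hc : j = 0 ∨ j = i
      · rw [if_pos hc, if_pos hc]
      · rw [if_neg hc, if_neg hc, sbY_eq_sbX D (by push_neg at hc; exact hc.1)]
  exact hm.2 (fun n => ENNReal.ofReal (sbY q D n))
    (fun i => sol_of_real hq hsb (sbY q D) hYnn hYeq i)

lemma sumform_eq (D : ℝ) (k : ℕ) :
    ∑ j ∈ Finset.range (k+1), (sbF q j 0 * D - sbd q j)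
      = D * (∑ n ∈ Finset.range (k+1), sbF q n 0) - ∑ n ∈ Finset.range (k+1), sbd q n := by
  rw [Finset.sum_sub_distrib, ← Finset.sum_mul]
  ring

end SBAux4
/-- Explicit strong ergodicity criterion for single birth processes (Zhang). -/
theorem single_birth_strongly_ergodic_iff (q : ℕ → ℕ → ℝ)
    (hq : IsQMatrix q) (hirr : MatIrreducible q) (hreg : QRegular q)
    (hsb : IsSingleBirth q)
    (m : ℕ → ℝ≥0∞)
    (hm : IsMinSol (fun i j => if j = 0 then 0 else embed q i j)
      (fun i => (ENNReal.ofReal (-q i i))⁻¹) m) :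
    (⨆ i, m i) < ⊤ ↔
      (sbdConst q < ⊤ ∧ ∃ C : ℝ, ∀ k : ℕ,
        (∑ j ∈ Finset.range (k + 1),
          (sbF q j 0 * (sbdConst q).toReal - sbd q j)) ≤ C) := by
  have hm1 : ∀ i, m i = (∑' j, (if j = 0 then 0 else embed q i j) * m j)
      + (ENNReal.ofReal (-q i i))⁻¹ := hm.1
  constructor
  · intro hsup
    have h1top : m 1 ≠ ⊤ := (lt_of_le_of_lt (le_iSup m 1) hsup).ne
    have hfin := m_fin hq hsb hm1 h1top
    set xm : ℕ → ℝ := fun n => if n = 0 then 0 else (m n).toReal with hxm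
    have hxm0 : xm 0 = 0 := by simp [hxm]
    have hxmval : ∀ n, n ≠ 0 → xm n = (m n).toReal := fun n hn => by simp [hxm, hn]
    have hneqm : ∀ i, 1 ≤ i → xm i = (∑ j ∈ Finset.range (i+2),
        if j = 0 ∨ j = i then 0 else (q i j / (-q i i)) * xm j) + (-q i i)⁻¹ := by
      intro i hi
      rw [hxmval i (by omega), real_eq hq hsb hm1 hfin i]
      congr 1
      refine Finset.sum_congr rfl fun j hj => ?_
      by_cases hc : j = 0 ∨ j = i
      · rw [if_pos hc, if_pos hc]
      · rw [if_neg hc, if_neg hc, hxmval j (by push_neg at hc; exact hc.1)]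
    have hdiff := diff_of_heq hq hsb xm hxm0
      (fun n hn => (neq_iff hq hsb xm hxm0 hn).mp (hneqm n hn))
    have hx1 : xm 1 = (m 1).toReal := hxmval 1 one_ne_zero
    have hsumform : ∀ k, xm (k+1) = xm 1 * (∑ n ∈ Finset.range (k+1), sbF q n 0)
        - ∑ n ∈ Finset.range (k+1), sbd q n := by
      intro k
      induction k with
      | zero =>
        have h0 := hdiff 0
        rw [hxm0, sbF_zero', sbd_zero'] at h0
        rw [Finset.sum_range_one, Finset.sum_range_one, sbF_zero', sbd_zero']
        linarith
      | succ p ih =>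
        have hp := hdiff (p+1)
        have h5 : xm (p+1+1) = xm (p+1) + (xm 1 * sbF q (p+1) 0 - sbd q (p+1)) := by
          linarith
        rw [h5, ih, Finset.sum_range_succ (fun n => sbF q n 0) (p+1),
          Finset.sum_range_succ (fun n => sbd q n) (p+1)]
        ring
    have hSd_le : ∀ k, (∑ n ∈ Finset.range (k+1), sbd q n)
        ≤ xm 1 * ∑ n ∈ Finset.range (k+1), sbF q n 0 := by
      intro k
      have h0 : 0 ≤ xm (k+1) := by
        rw [hxmval (k+1) (by omega)]; exact ENNReal.toReal_nonneg
      rw [hsumform k] at h0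
      linarith
    have hconst_le : sbdConst q ≤ ENNReal.ofReal (xm 1) := by
      refine iSup_le fun k => ?_
      exact ENNReal.ofReal_le_ofReal ((div_le_iff₀ (SF_pos hq hsb k)).mpr (hSd_le k))
    have hconst_lt : sbdConst q < ⊤ := lt_of_le_of_lt hconst_le ENNReal.ofReal_lt_top
    have hD0 : 0 ≤ (sbdConst q).toReal := ENNReal.toReal_nonneg
    have hDle : (sbdConst q).toReal ≤ xm 1 := by
      have h2 := ENNReal.toReal_mono ENNReal.ofReal_ne_top hconst_le
      rwa [ENNReal.toReal_ofReal (by rw [hx1]; exact ENNReal.toReal_nonneg)] at h2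
    have hle := min_le_Y hq hsb hm (sbdConst q).toReal hD0 (ratio_le hq hsb hconst_lt.ne)
    have hM1D : xm 1 ≤ (sbdConst q).toReal := by
      have h3 := hle 1
      rw [sbY_one] at h3
      rw [hx1]
      exact ENNReal.toReal_le_of_le_ofReal hD0 h3
    have hM1eq : xm 1 = (sbdConst q).toReal := le_antisymm hM1D hDle
    refine ⟨hconst_lt, (⨆ i, m i).toReal, fun k => ?_⟩
    rw [sumform_eq, ← hM1eq, ← hsumform k, hxmval (k+1) (by omega)]
    exact ENNReal.toReal_mono hsup.ne (le_iSup m (k+1))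
  · rintro ⟨hfin, C, hC⟩
    have hD0 : 0 ≤ (sbdConst q).toReal := ENNReal.toReal_nonneg
    have hle := min_le_Y hq hsb hm (sbdConst q).toReal hD0 (ratio_le hq hsb hfin.ne)
    have hbound : ∀ n, sbY q (sbdConst q).toReal n
        ≤ max C ((sbdConst q).toReal + (-q 0 0)⁻¹) := by
      intro n
      match n with
      | 0 =>
        rw [show sbY q (sbdConst q).toReal 0 = (sbdConst q).toReal + (-q 0 0)⁻¹ from rfl]
        exact le_max_right _ _
      | Nat.succ p =>
        have h4 : sbY q (sbdConst q).toReal (p+1)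
            = ∑ j ∈ Finset.range (p+1), (sbF q j 0 * (sbdConst q).toReal - sbd q j) := by
          rw [sumform_eq]
          simp [sbY]
        rw [h4]
        exact (hC p).trans (le_max_left _ _)
    refine lt_of_le_of_lt (b := ENNReal.ofReal (max C ((sbdConst q).toReal + (-q 0 0)⁻¹)))
      (iSup_le fun n => ?_) ENNReal.ofReal_lt_top
    exact (hle n).trans (ENNReal.ofReal_le_ofReal (hbound n))
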